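/- For every surreal number x, the class No^{⊒x} = { y : x ⊑ y } of numbers extending x is a surreal substructure, with parametrisation z ↦ x ∔ z; that is, z ↦ x ∔ z is an isomorphism from (No, <, ⊏) onto (No^{⊒x}, <, ⊏). -/

import Mathlib

/-!
Concatenation on the left shifts a sign sequence by `ℓ(x)` and fills the first `ℓ(x)` places
with the signs of `x`. Both `<` and `⊑` only compare signs below some position, and the
positions `≥ ℓ(x)` of `x ∔ z` are in order-preserving bijection with the positions of `z`, so
both relations transfer. Every `y ⊒ x` is `x ∔ z` for `z` the sign sequence of `y` read from
position `ℓ(x)` on.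
-/

open Ordinal

attribute [local instance] Classical.propDecidable

/-- A surreal number presented as a sign sequence: a map from an ordinal (its
length) to `{-1, +1}`, extended by `0` beyond its length. -/
structure SSurreal : Type 1 where
  length : Ordinal.{0}
  sign : Ordinal → ℤ
  sign_mem : ∀ α, α < length → sign α = 1 ∨ sign α = -1
  sign_zero : ∀ α, ¬ α < length → sign α = 0

namespace SSurreal

/-- Simplicity: `x ⊑ y`, i.e. `x` is an initial segment of `y`. -/
def sle (x y : SSurreal) : Prop := ∀ α, α < x.length → x.sign α = y.sign α

/-- Strict simplicity `x ⊏ y`. -/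
def slt (x y : SSurreal) : Prop := sle x y ∧ x ≠ y

/-- The (lexicographic, Conway) order on sign sequences. -/
def lt (x y : SSurreal) : Prop :=
  ∃ α, (∀ β, β < α → x.sign β = y.sign β) ∧ x.sign α < y.sign α

/-- The empty sign sequence, i.e. the surreal number `0`. -/
noncomputable def zero : SSurreal :=
  ⟨0, fun _ => 0, fun α h => absurd h (by simp), fun _ _ => rfl⟩

/-- The ordinal `o` viewed as the constant `+1` sign sequence of length `o`. -/
noncomputable def ofOrdinal (o : Ordinal) : SSurreal :=
  ⟨o, fun α => if α < o then 1 else 0, fun α h => Or.inl (if_pos h), fun α h => if_neg h⟩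

/-- The surreal number `1`. -/
noncomputable def one : SSurreal := ofOrdinal 1

/-- The surreal number `-1`. -/
noncomputable def negOne : SSurreal :=
  ⟨1, fun α => if α < 1 then -1 else 0, fun α h => Or.inr (if_pos h), fun α h => if_neg h⟩

/-- Negation: flip every sign. -/
noncomputable def neg (x : SSurreal) : SSurreal :=
  ⟨x.length, fun α => - x.sign α,
    fun α h => by rcases x.sign_mem α h with h' | h' <;> simp [h'],
    fun α h => by simp [x.sign_zero α h]⟩

/-- Concatenation `x ∔ y` of sign sequences. -/
noncomputable def concat (x y : SSurreal) : SSurreal where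
  length := x.length + y.length
  sign α := if α < x.length then x.sign α else y.sign (α - x.length)
  sign_mem := by
    intro α h
    by_cases hx : α < x.length
    · rw [if_pos hx]; exact x.sign_mem α hx
    · rw [if_neg hx]
      refine y.sign_mem _ ?_
      have hle : x.length ≤ α := not_lt.mp hx
      have := Ordinal.sub_lt_of_le hle (c := y.length)
      exact this.mpr h
  sign_zero := by
    intro α h
    have hx : ¬ α < x.length := fun hx =>
      h (hx.trans_le le_self_add)
    rw [if_neg hx]
    refine y.sign_zero _ ?_
    intro hy
    exact h ((Ordinal.sub_lt_of_le (not_lt.mp hx)).mp hy)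

/-- The concatenation product `x ⨰ y` of sign sequences. -/
noncomputable def mul (x y : SSurreal) : SSurreal where
  length := x.length * y.length
  sign γ := if γ < x.length * y.length then y.sign (γ / x.length) * x.sign (γ % x.length) else 0
  sign_mem := by
    intro γ h
    rw [if_pos h]
    have hx0 : x.length ≠ 0 := by
      intro h0; rw [h0, zero_mul] at h; exact (by simp : ¬ γ < 0) h
    have h1 : γ / x.length < y.length := by
      rwa [Ordinal.div_lt hx0]
    have h2 : γ % x.length < x.length := Ordinal.mod_lt γ hx0
    rcases y.sign_mem _ h1 with hy | hy <;> rcases x.sign_mem _ h2 with hx | hx <;>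
      simp [hy, hx]
  sign_zero := fun γ h => if_neg h

/-- `s` is the supremum of `C` with respect to simplicity. -/
def IsSimpSup (C : Set SSurreal) (s : SSurreal) : Prop :=
  (∀ x ∈ C, sle x s) ∧ ∀ t, (∀ x ∈ C, sle x t) → sle s t

/-- The supremum of a ⊏-chain of sign sequences (their union), when it
exists; junk value `zero` otherwise. -/
noncomputable def chainSup (C : Set SSurreal) : SSurreal :=
  if h : ∃ s, IsSimpSup C s then h.choose else zero

/-- Transfinite concatenation `[α, f] = ∔_{γ<α} f(γ)`. -/
noncomputable def concatSum (α : Ordinal) (f : Ordinal → SSurreal) : SSurreal :=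
  Ordinal.limitRecOn α zero (fun β ih => concat ih (f β))
    (fun γ _ ih => chainSup (Set.range fun p : Set.Iio γ => ih p.1 p.2))

/-- Restriction of `z` to an initial segment of length (at most) `β`. -/
noncomputable def trunc (z : SSurreal) (β : Ordinal) : SSurreal where
  length := min β z.length
  sign α := if α < min β z.length then z.sign α else 0
  sign_mem := fun α h => by
    rw [if_pos h]; exact z.sign_mem α (h.trans_le (min_le_right _ _))
  sign_zero := fun α h => if_neg h

/-- The number of `+1` signs occurring in `s` strictly below `γ`. -/
noncomputable def countPlus (s : Ordinal → ℤ) (γ : Ordinal) : Ordinal :=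
  Ordinal.limitRecOn γ 0 (fun β ih => if s β = 1 then ih + 1 else ih)
    (fun γ' _ ih => ⨆ β : Set.Iio γ', ih β.1 β.2)

/-- `τ_u`: the ordinal number of `+1` signs in the sign sequence of `u`. -/
noncomputable def tau (u : SSurreal) : Ordinal := countPlus u.sign u.length

end SSurreal

namespace SSurreal

theorem sign_ne_zero_iff (x : SSurreal) (α : Ordinal) : x.sign α ≠ 0 ↔ α < x.length := by
  refine ⟨not_imp_comm.1 (x.sign_zero α), fun h => ?_⟩
  rcases x.sign_mem α h with h' | h' <;> simp [h']

theorem ext_sign {x y : SSurreal} (h : x.sign = y.sign) : x = y := by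
  have hl : x.length = y.length :=
    eq_of_forall_lt_iff fun α => by rw [← sign_ne_zero_iff, ← sign_ne_zero_iff, h]
  cases x; cases y
  cases hl; cases h
  rfl

theorem sign_concat_of_lt (x z : SSurreal) {α : Ordinal} (h : α < x.length) :
    (concat x z).sign α = x.sign α := if_pos h

theorem sign_concat_add (x z : SSurreal) (α : Ordinal) :
    (concat x z).sign (x.length + α) = z.sign α := by
  simp only [concat, if_neg (not_lt.2 le_self_add), Ordinal.add_sub_cancel]

theorem sle_concat (x z : SSurreal) : sle x (concat x z) :=
  fun _ h => (sign_concat_of_lt x z h).symm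

theorem concat_injective (x : SSurreal) : Function.Injective (concat x) :=
  fun z w h => ext_sign <| funext fun α => by
    rw [← sign_concat_add x z, h, sign_concat_add]

theorem forall_sign_concat_eq_iff (x z w : SSurreal) (α : Ordinal) :
    (∀ β < x.length + α, (concat x z).sign β = (concat x w).sign β) ↔
      ∀ β < α, z.sign β = w.sign β := by
  refine ⟨fun h β hβ => ?_, fun h β hβ => ?_⟩
  · simpa only [sign_concat_add] using h (x.length + β) (add_lt_add_right hβ _)
  · rcases lt_or_ge β x.length with hx | hx
    · rw [sign_concat_of_lt x z hx, sign_concat_of_lt x w hx]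
    · obtain ⟨γ, rfl⟩ := exists_add_of_le hx
      rw [sign_concat_add, sign_concat_add]
      exact h γ (lt_of_add_lt_add_left hβ)

theorem sle_concat_concat_iff (x z w : SSurreal) :
    sle (concat x z) (concat x w) ↔ sle z w :=
  forall_sign_concat_eq_iff x z w z.length

theorem slt_concat_concat_iff (x z w : SSurreal) :
    slt (concat x z) (concat x w) ↔ slt z w :=
  and_congr (sle_concat_concat_iff x z w) (concat_injective x).ne_iff

theorem lt_concat_concat_iff (x z w : SSurreal) :
    lt (concat x z) (concat x w) ↔ lt z w := by
  constructor
  · rintro ⟨α, hagree, hlt⟩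
    rcases lt_or_ge α x.length with hx | hx
    · rw [sign_concat_of_lt x z hx, sign_concat_of_lt x w hx] at hlt
      exact (lt_irrefl _ hlt).elim
    · obtain ⟨γ, rfl⟩ := exists_add_of_le hx
      rw [sign_concat_add, sign_concat_add] at hlt
      exact ⟨γ, (forall_sign_concat_eq_iff x z w γ).1 hagree, hlt⟩
  · rintro ⟨α, hagree, hlt⟩
    refine ⟨x.length + α, (forall_sign_concat_eq_iff x z w α).2 hagree, ?_⟩
    rwa [sign_concat_add, sign_concat_add]

noncomputable def drop (y : SSurreal) (β : Ordinal) : SSurreal where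
  length := y.length - β
  sign α := y.sign (β + α)
  sign_mem _ h := y.sign_mem _ (Ordinal.lt_sub.1 h)
  sign_zero _ h := y.sign_zero _ fun h' => h (Ordinal.lt_sub.2 h')

theorem concat_drop {x y : SSurreal} (h : sle x y) : concat x (drop y x.length) = y := by
  refine ext_sign (funext fun α => ?_)
  rcases lt_or_ge α x.length with hx | hx
  · rw [sign_concat_of_lt _ _ hx, h α hx]
  · obtain ⟨γ, rfl⟩ := exists_add_of_le hx
    rw [sign_concat_add]
    rfl

end SSurreal

open SSurreal in
/-- for every `x`, the map `z ↦ x ∔ z` is a `(<, ⊏)`-isomorphism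
from `No` onto the class `No^{⊒x} = { y : x ⊑ y }`; in particular `No^{⊒x}` is
a surreal substructure parametrised by `z ↦ x ∔ z`. -/
theorem concat_left_parametrises_extensions (x : SSurreal) :
    (∀ z w : SSurreal, lt z w ↔ lt (concat x z) (concat x w)) ∧
    (∀ z w : SSurreal, slt z w ↔ slt (concat x z) (concat x w)) ∧
    (∀ z : SSurreal, sle x (concat x z)) ∧
    (∀ y : SSurreal, sle x y → ∃ z, concat x z = y) := by
  exact ⟨fun z w => (lt_concat_concat_iff x z w).symm,
    fun z w => (slt_concat_concat_iff x z w).symm, sle_concat x,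
    fun y hy => ⟨drop y x.length, concat_drop hy⟩⟩
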